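/- arXiv:2506.04638 — 2 statements merged into one kernel-verified Lean document; each statement's English description precedes it below -/
import Mathlib

section
/- Let Ω ⊆ ℂ² be open and let t, u : ℤ → (Ω → ℂ) be families of holomorphic functions with every t_n nonvanishing on Ω, satisfying the bilinear 2-dimensional Toda–Hirota equation t_n·∂_x∂_y t_n − (∂_x t_n)(∂_y t_n) = t_{n+1}·t_{n−1} for all n ∈ ℤ. Define r_n := ( t_n·∂_x∂_y t_n − (∂_x t_n)(∂_y t_n) )/t_n² (= t_{n+1}t_{n−1}/t_n²) and s_{n+1} := (∂_y t_n)/t_n − (∂_y t_{n+1})/t_{n+1}. Suppose that for every n ∈ ℤ: (a) ∂_x∂_y u_n + s_{n+1}·∂_x u_n + r_n·u_n = 0; (b) u_{n+1} = ∂_y u_n + s_{n+1}·u_n; (c) ∂_x u_n = −r_n·u_{n−1}. Then τ_n := t_n·u_n satisfies τ_n·∂_x∂_y τ_n − (∂_x τ_n)(∂_y τ_n) = τ_{n+1}·τ_{n−1} on Ω for all n ∈ ℤ. -/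
/-!
Since `∂ₓ∂_y log (t u) = ∂ₓ∂_y log t + ∂ₓ∂_y log u`, the bilinear Hirota expression
`H f = f ∂ₓ∂_y f − ∂ₓf ∂_y f` satisfies `H (t u) = u² H t + t² H u`. The Laplace equation
together with the two contiguity relations gives `H u_n = r_n (u_{n+1} u_{n−1} − u_n²)`, the terms with
`s_{n+1}` cancelling, and `r_n t_n² = t_{n+1} t_{n−1}` then turns `H (t_n u_n)` into
`t_{n+1} t_{n−1} u_{n+1} u_{n−1}`.
-/

/-- Partial derivative with respect to the first coordinate of `ℂ × ℂ`. -/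
noncomputable def dX (f : ℂ × ℂ → ℂ) : ℂ × ℂ → ℂ := fun z => fderiv ℂ f z (1, 0)

/-- Partial derivative with respect to the second coordinate of `ℂ × ℂ`. -/
noncomputable def dY (f : ℂ × ℂ → ℂ) : ℂ × ℂ → ℂ := fun z => fderiv ℂ f z (0, 1)

/-- `½ D_x D_y (f·f)` in Hirota's bilinear notation. -/
noncomputable def hirotaXY (f : ℂ × ℂ → ℂ) (z : ℂ × ℂ) : ℂ :=
  f z * dX (dY f) z - dX f z * dY f z

section Derivatives

variable {f g : ℂ × ℂ → ℂ} {z : ℂ × ℂ}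

lemma dX_mul (hf : DifferentiableAt ℂ f z) (hg : DifferentiableAt ℂ g z) :
    dX (fun w => f w * g w) z = dX f z * g z + f z * dX g z := by
  simp only [dX, fderiv_fun_mul hf hg, add_apply, smul_apply, smul_eq_mul]
  ring

lemma dY_mul (hf : DifferentiableAt ℂ f z) (hg : DifferentiableAt ℂ g z) :
    dY (fun w => f w * g w) z = dY f z * g z + f z * dY g z := by
  simp only [dY, fderiv_fun_mul hf hg, add_apply, smul_apply, smul_eq_mul]
  ring

lemma dX_add (hf : DifferentiableAt ℂ f z) (hg : DifferentiableAt ℂ g z) :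
    dX (fun w => f w + g w) z = dX f z + dX g z := by
  simp only [dX, fderiv_fun_add hf hg, add_apply]

lemma AnalyticAt.differentiableAt_dY (hf : AnalyticAt ℂ f z) :
    DifferentiableAt ℂ (dY f) z :=
  hf.fderiv.differentiableAt.clm_apply (differentiableAt_const _)

lemma dX_dY_mul (hf : AnalyticAt ℂ f z) (hg : AnalyticAt ℂ g z) :
    dX (dY (fun w => f w * g w)) z
      = dX (dY f) z * g z + dY f z * dX g z + dX f z * dY g z + f z * dX (dY g) z := by
  have hdY : dY (fun w => f w * g w) =ᶠ[nhds z] fun w => dY f w * g w + f w * dY g w := by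
    filter_upwards [hf.eventually_analyticAt, hg.eventually_analyticAt] with w hfw hgw
    exact dY_mul hfw.differentiableAt hgw.differentiableAt
  have hdX_congr : dX (dY (fun w => f w * g w)) z
      = dX (fun w => dY f w * g w + f w * dY g w) z := by
    simp only [dX, hdY.fderiv_eq]
  rw [hdX_congr,
    dX_add (hf.differentiableAt_dY.fun_mul hg.differentiableAt)
      (hf.differentiableAt.fun_mul hg.differentiableAt_dY),
    dX_mul hf.differentiableAt_dY hg.differentiableAt,
    dX_mul hf.differentiableAt hg.differentiableAt_dY]
  ring

lemma hirotaXY_mul (hf : AnalyticAt ℂ f z) (hg : AnalyticAt ℂ g z) :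
    hirotaXY (fun w => f w * g w) z = g z ^ 2 * hirotaXY f z + f z ^ 2 * hirotaXY g z := by
  simp only [hirotaXY, dX_dY_mul hf hg, dX_mul hf.differentiableAt hg.differentiableAt,
    dY_mul hf.differentiableAt hg.differentiableAt]
  ring

end Derivatives

lemma hirotaXY_eq_of_laplace {u uNext uPrev : ℂ × ℂ → ℂ} {z : ℂ × ℂ} {s r : ℂ}
    (hlap : dX (dY u) z + s * dX u z + r * u z = 0)
    (hup : uNext z = dY u z + s * u z) (hdown : dX u z = -r * uPrev z) :
    hirotaXY u z = r * (uNext z * uPrev z - u z ^ 2) := by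
  unfold hirotaXY
  linear_combination u z * hlap + dX u z * hup - uNext z * hdown

theorem stmt_5_general (Ω : Set (ℂ × ℂ))
    (t u : ℤ → ℂ × ℂ → ℂ)
    (ht : ∀ n : ℤ, AnalyticOnNhd ℂ (t n) Ω)
    (hu : ∀ n : ℤ, AnalyticOnNhd ℂ (u n) Ω)
    (htne : ∀ n : ℤ, ∀ z ∈ Ω, t n z ≠ 0)
    (hTHE : ∀ n : ℤ, ∀ z ∈ Ω,
      t n z * dX (dY (t n)) z - dX (t n) z * dY (t n) z = t (n+1) z * t (n-1) z)
    (s r : ℤ → ℂ × ℂ → ℂ)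
    (hr : ∀ n : ℤ, r n
      = fun z => (t n z * dX (dY (t n)) z - dX (t n) z * dY (t n) z) / (t n z)^2)
    (ha : ∀ n : ℤ, ∀ z ∈ Ω,
      dX (dY (u n)) z + s (n+1) z * dX (u n) z + r n z * u n z = 0)
    (hb : ∀ n : ℤ, ∀ z ∈ Ω, u (n+1) z = dY (u n) z + s (n+1) z * u n z)
    (hc : ∀ n : ℤ, ∀ z ∈ Ω, dX (u n) z = -(r n z) * u (n-1) z)
    (τ : ℤ → ℂ × ℂ → ℂ)
    (hτ : ∀ n : ℤ, τ n = fun z => t n z * u n z) :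
    ∀ n : ℤ, ∀ z ∈ Ω,
      τ n z * dX (dY (τ n)) z - dX (τ n) z * dY (τ n) z = τ (n+1) z * τ (n-1) z := by
  intro n z hz
  have hrt : r n z * t n z ^ 2 = t (n+1) z * t (n-1) z := by
    rw [hr n, div_mul_cancel₀ _ (pow_ne_zero 2 (htne n z hz))]
    exact hTHE n z hz
  have htoda : hirotaXY (t n) z = t (n+1) z * t (n-1) z := hTHE n z hz
  have hlap : hirotaXY (u n) z = r n z * (u (n+1) z * u (n-1) z - u n z ^ 2) :=
    hirotaXY_eq_of_laplace (ha n z hz) (hb n z hz) (hc n z hz)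
  change hirotaXY (τ n) z = _
  rw [hτ n, hirotaXY_mul (ht n z hz) (hu n z hz), htoda, hlap, hτ, hτ]
  linear_combination (u (n+1) z * u (n-1) z - u n z ^ 2) * hrt

/-- Proposition 2.11 (Bäcklund transformation): if `{t_n}` solves the bilinear 2-dimensional
Toda–Hirota equation, and `u_n` solves the Laplace sequence equation
`∂ₓ∂_y u_n + s_{n+1}∂ₓu_n + r_n u_n = 0` with `u_{n+1} = H_n u_n = ∂_y u_n + s_{n+1}u_n`
and `u_{n-1} = B_n u_n`, i.e. `∂ₓu_n = −r_n u_{n−1}`, then `τ_n = t_n·u_n` again solves the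
bilinear 2-dimensional Toda–Hirota equation. -/
theorem stmt_5 (Ω : Set (ℂ × ℂ)) (hΩ : IsOpen Ω)
    (t u : ℤ → ℂ × ℂ → ℂ)
    (ht : ∀ n : ℤ, AnalyticOnNhd ℂ (t n) Ω)
    (hu : ∀ n : ℤ, AnalyticOnNhd ℂ (u n) Ω)
    (htne : ∀ n : ℤ, ∀ z ∈ Ω, t n z ≠ 0)
    (hTHE : ∀ n : ℤ, ∀ z ∈ Ω,
      t n z * dX (dY (t n)) z - dX (t n) z * dY (t n) z = t (n+1) z * t (n-1) z)
    (s r : ℤ → ℂ × ℂ → ℂ)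
    (hr : ∀ n : ℤ, r n
      = fun z => (t n z * dX (dY (t n)) z - dX (t n) z * dY (t n) z) / (t n z)^2)
    (hs : ∀ n : ℤ, s (n+1)
      = fun z => dY (t n) z / t n z - dY (t (n+1)) z / t (n+1) z)
    (ha : ∀ n : ℤ, ∀ z ∈ Ω,
      dX (dY (u n)) z + s (n+1) z * dX (u n) z + r n z * u n z = 0)
    (hb : ∀ n : ℤ, ∀ z ∈ Ω, u (n+1) z = dY (u n) z + s (n+1) z * u n z)
    (hc : ∀ n : ℤ, ∀ z ∈ Ω, dX (u n) z = -(r n z) * u (n-1) z)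
    (τ : ℤ → ℂ × ℂ → ℂ)
    (hτ : ∀ n : ℤ, τ n = fun z => t n z * u n z) :
    ∀ n : ℤ, ∀ z ∈ Ω,
      τ n z * dX (dY (τ n)) z - dX (τ n) z * dY (τ n) z = τ (n+1) z * τ (n-1) z :=
  stmt_5_general Ω t u ht hu htne hTHE s r hr ha hb hc τ hτ
end

section
/- Let N ≥ 2, α ∈ ℂ^N, fix distinct 1 ≤ i, j ≤ N, and assume p(n) := (α_i + n)(α_j − n + 1) ≠ 0 for all n ∈ ℤ. Let Ω ⊆ {x ∈ ℂ^N : x_a ≠ x_b for all a ≠ b, and x_i − x_j ∈ ℂ∖ℝ_{≤0}} be open. Let u : ℤ → (Ω → ℂ) be a family of holomorphic functions such that for each n ∈ ℤ: (a) u_n satisfies the Euler–Poisson–Darboux system at shifted parameters, M_{p,q}(α + n(e_i − e_j))u_n = 0 for all distinct p, q (in particular ∂_i∂_j u_n + ((α_j − n)/(x_i − x_j))∂_i u_n + ((α_i + n)/(x_j − x_i))∂_j u_n = 0); (b) u_{n+1} = (x_i − x_j)·∂_j u_n + (α_j − n)·u_n; (c) (x_j − x_i)·∂_i u_n + (α_i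 + n)·u_n = (α_i + n)(α_j − n + 1)·u_{n−1}. Let B : ℤ → ℂ satisfy B(n+1)·B(n−1) = p(n)·B(n)² for all n. Then τ_n := B(n)·(x_i − x_j)^{(α_i+n)(α_j−n)}·u_n satisfies the bilinear 2-dimensional Toda–Hirota equation τ_n·∂_i∂_j τ_n − (∂_i τ_n)(∂_j τ_n) = τ_{n+1}·τ_{n−1} on Ω for all n ∈ ℤ. -/
/-!
Writing `w = x_i − x_j` and `c_n = (α_i + n)(α_j − n)`, the Hirota expression
`D f = f ∂_i∂_j f − ∂_i f ∂_j f` (that is, `f² ∂_i∂_j log f`) satisfies `D (g u) = u² D g + g² D u`,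
and `D (B w^c) = c (B w^c / w)²`. Hence `D τ_n = (B_n w^{c_n} / w)² (w² D u_n + c_n u_n²)`.
Eliminating `∂_i∂_j u_n` by the Euler–Poisson–Darboux equation and using the two contiguity
relations, `w² D u_n + c_n u_n² = p(n) u_{n+1} u_{n−1}`; since `c_{n+1} + c_{n−1} = 2 c_n − 2` and
`B_{n+1} B_{n−1} = p(n) B_n²`, this is `τ_{n+1} τ_{n−1}`.
-/

/-- Partial derivative of a function on `ℂ^N` with respect to the `p`-th coordinate. -/
noncomputable def pder {N : ℕ} (p : Fin N) (f : (Fin N → ℂ) → ℂ) : (Fin N → ℂ) → ℂ :=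
  fun x => fderiv ℂ f x (Pi.single p (1 : ℂ))

open Filter Topology Complex

variable {N : ℕ}

noncomputable def hirota (i j : Fin N) (f : (Fin N → ℂ) → ℂ) (x : Fin N → ℂ) : ℂ :=
  f x * pder i (pder j f) x - pder i f x * pder j f x

section pder

variable {f g : (Fin N → ℂ) → ℂ} {x : Fin N → ℂ}

theorem pder_congr_of_eventuallyEq (p : Fin N) (h : f =ᶠ[𝓝 x] g) : pder p f x = pder p g x := by
  simp only [pder, h.fderiv_eq]

@[simp]
theorem pder_const (p : Fin N) (c : ℂ) : pder p (fun _ => c) = 0 := by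
  funext x
  simp [pder]

theorem AnalyticAt.pder (p : Fin N) (hf : AnalyticAt ℂ f x) : AnalyticAt ℂ (pder p f) x :=
  ((ContinuousLinearMap.apply ℂ ℂ (Pi.single p (1 : ℂ) : Fin N → ℂ)).analyticAt _).comp hf.fderiv

theorem pder_add (p : Fin N) (hf : DifferentiableAt ℂ f x) (hg : DifferentiableAt ℂ g x) :
    pder p (f + g) x = pder p f x + pder p g x := by
  simp [pder, fderiv_add hf hg]

theorem pder_mul (p : Fin N) (hf : DifferentiableAt ℂ f x) (hg : DifferentiableAt ℂ g x) :
    pder p (f * g) x = pder p f x * g x + f x * pder p g x := by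
  simp only [pder, fderiv_mul hf hg, add_apply, smul_apply, smul_eq_mul]
  ring

theorem pder_pder_mul (p q : Fin N) (hf : AnalyticAt ℂ f x) (hg : AnalyticAt ℂ g x) :
    pder p (pder q (f * g)) x = pder p (pder q f) x * g x + pder q f x * pder p g x
      + pder p f x * pder q g x + f x * pder p (pder q g) x := by
  have hnear : pder q (f * g) =ᶠ[𝓝 x] pder q f * g + f * pder q g := by
    filter_upwards [hf.eventually_analyticAt, hg.eventually_analyticAt] with y hfy hgy
    exact pder_mul q hfy.differentiableAt hgy.differentiableAt
  have hfq := (hf.pder q).differentiableAt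
  have hgq := (hg.pder q).differentiableAt
  rw [pder_congr_of_eventuallyEq p hnear,
    pder_add p (hfq.mul hg.differentiableAt) (hf.differentiableAt.mul hgq),
    pder_mul p hfq hg.differentiableAt, pder_mul p hf.differentiableAt hgq]
  ring

end pder

section hirota

variable {i j : Fin N} {x : Fin N → ℂ}

theorem hirota_mul {f g : (Fin N → ℂ) → ℂ} (hf : AnalyticAt ℂ f x) (hg : AnalyticAt ℂ g x) :
    hirota i j (f * g) x = g x ^ 2 * hirota i j f x + f x ^ 2 * hirota i j g x := by
  simp only [hirota, pder_pder_mul i j hf hg, pder_mul i hf.differentiableAt hg.differentiableAt,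
    pder_mul j hf.differentiableAt hg.differentiableAt, Pi.mul_apply]
  ring

@[simp]
theorem hirota_const (c : ℂ) : hirota i j (fun _ => c) x = 0 := by
  simp [hirota, pder]

theorem analyticAt_sub_cpow (e : ℂ) (hx : x i - x j ∈ slitPlane) :
    AnalyticAt ℂ (fun z : Fin N → ℂ => (z i - z j) ^ e) x :=
  (((ContinuousLinearMap.proj i).analyticAt x).sub
    ((ContinuousLinearMap.proj j).analyticAt x)).cpow analyticAt_const hx

theorem pder_sub_cpow (p : Fin N) (e : ℂ) (hx : x i - x j ∈ slitPlane) :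
    pder p (fun z => (z i - z j) ^ e) x
      = e * (x i - x j) ^ (e - 1)
        * ((Pi.single p (1 : ℂ) : Fin N → ℂ) i - (Pi.single p (1 : ℂ) : Fin N → ℂ) j) := by
  have hsub : HasFDerivAt (fun z : Fin N → ℂ => z i - z j)
      (ContinuousLinearMap.proj i - ContinuousLinearMap.proj j : (Fin N → ℂ) →L[ℂ] ℂ) x :=
    (ContinuousLinearMap.proj i : (Fin N → ℂ) →L[ℂ] ℂ).hasFDerivAt.sub
      (ContinuousLinearMap.proj j : (Fin N → ℂ) →L[ℂ] ℂ).hasFDerivAt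
  simp only [pder, (hsub.cpow (hasFDerivAt_const e x) hx).fderiv]
  simp

theorem hirota_sub_cpow (hij : i ≠ j) (e : ℂ) (hx : x i - x j ∈ slitPlane) :
    hirota i j (fun z => (z i - z j) ^ e) x = e * ((x i - x j) ^ e / (x i - x j)) ^ 2 := by
  have hw : x i - x j ≠ 0 := slitPlane_ne_zero hx
  have hnear : pder j (fun z => (z i - z j) ^ e) =ᶠ[𝓝 x]
      (fun _ => -e) * fun z => (z i - z j) ^ (e - 1) := by
    have hopen : IsOpen {z : Fin N → ℂ | z i - z j ∈ slitPlane} :=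
      isOpen_slitPlane.preimage (by fun_prop)
    filter_upwards [hopen.mem_nhds hx] with y hy
    simp [pder_sub_cpow j e hy, hij]
  rw [hirota, pder_congr_of_eventuallyEq i hnear,
    pder_mul i (differentiableAt_const (-e)) (analyticAt_sub_cpow _ hx).differentiableAt,
    pder_sub_cpow i _ hx, pder_sub_cpow i _ hx, pder_sub_cpow j _ hx, pder_const]
  simp only [Pi.single_eq_same, Pi.single_eq_of_ne hij, Pi.single_eq_of_ne hij.symm, Pi.zero_apply,
    cpow_sub _ _ hw, cpow_one]
  field_simp
  ring

theorem hirota_eq_of_contiguity {u up um : (Fin N → ℂ) → ℂ} {a b q : ℂ} (hw : x i - x j ≠ 0)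
    (hEPD : pder i (pder j u) x + (b / (x i - x j)) * pder i u x
      + (a / (x j - x i)) * pder j u x = 0)
    (hup : up x = (x i - x j) * pder j u x + b * u x)
    (hum : (x j - x i) * pder i u x + a * u x = q * um x) :
    (x i - x j) ^ 2 * hirota i j u x + a * b * u x ^ 2 = q * up x * um x := by
  have hE : (x i - x j) * pder i (pder j u) x = a * pder j u x - b * pder i u x := by
    rw [show x j - x i = -(x i - x j) by ring, div_neg] at hEPD
    field_simp at hEPD
    linear_combination hEPD
  rw [hup, mul_right_comm q, ← hum, hirota]
  linear_combination (x i - x j) * u x * hE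

end hirota

theorem cpow_mul_cpow_shift {w : ℂ} (hw : w ≠ 0) (a b : ℂ) :
    w ^ ((a + 1) * (b - 1)) * w ^ ((a - 1) * (b + 1)) = (w ^ (a * b) / w) ^ 2 := by
  rw [← cpow_add _ _ hw, show (a + 1) * (b - 1) + (a - 1) * (b + 1) = (a * b - 1) + (a * b - 1) by
    ring, cpow_add _ _ hw, cpow_sub _ _ hw, cpow_one, sq]

theorem stmt_18_general {N : ℕ} (α : Fin N → ℂ)
    (i j : Fin N) (hij : i ≠ j)
    (Ω : Set (Fin N → ℂ))
    (hΩsub : Ω ⊆ {x | (∀ a b : Fin N, a ≠ b → x a ≠ x b) ∧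
      x i - x j ∈ Complex.slitPlane})
    (u : ℤ → (Fin N → ℂ) → ℂ)
    (hu : ∀ n : ℤ, AnalyticOnNhd ℂ (u n) Ω)
    (αsh : ℤ → Fin N → ℂ)
    (hαsh : ∀ n : ℤ, αsh n
      = fun k => α k + (n : ℂ) *
          ((Pi.single i (1 : ℂ) : Fin N → ℂ) k - (Pi.single j (1 : ℂ) : Fin N → ℂ) k))
    (hEPD : ∀ n : ℤ, ∀ p q : Fin N, p ≠ q → ∀ x ∈ Ω,
      pder p (pder q (u n)) x + (αsh n q / (x p - x q)) * pder p (u n) x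
        + (αsh n p / (x q - x p)) * pder q (u n) x = 0)
    (hH : ∀ n : ℤ, ∀ x ∈ Ω,
      u (n+1) x = (x i - x j) * pder j (u n) x + (α j - n) * u n x)
    (hB : ∀ n : ℤ, ∀ x ∈ Ω,
      (x j - x i) * pder i (u n) x + (α i + n) * u n x
        = (α i + n) * (α j - n + 1) * u (n-1) x)
    (B : ℤ → ℂ)
    (hBrec : ∀ n : ℤ, B (n+1) * B (n-1) = (α i + n) * (α j - n + 1) * (B n)^2)
    (τ : ℤ → (Fin N → ℂ) → ℂ)
    (hτ : ∀ n : ℤ, τ n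
      = fun x => B n * (x i - x j) ^ ((α i + n) * (α j - n)) * u n x) :
    ∀ n : ℤ, ∀ x ∈ Ω,
      τ n x * pder i (pder j (τ n)) x - pder i (τ n) x * pder j (τ n) x
        = τ (n+1) x * τ (n-1) x := by
  intro n x hx
  have hslit : x i - x j ∈ slitPlane := (hΩsub hx).2
  have hw : x i - x j ≠ 0 := slitPlane_ne_zero hslit
  set c : ℂ := (α i + n) * (α j - n) with hc
  have hτn : τ n = (fun _ => B n) * ((fun z => (z i - z j) ^ c) * u n) := by
    rw [hτ n]
    funext z
    simp only [Pi.mul_apply, mul_assoc, hc]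
  have hpow := analyticAt_sub_cpow c hslit
  have hgauge : hirota i j (τ n) x = (B n * ((x i - x j) ^ c / (x i - x j))) ^ 2
      * ((x i - x j) ^ 2 * hirota i j (u n) x + c * u n x ^ 2) := by
    rw [hτn, hirota_mul analyticAt_const (hpow.mul (hu n x hx)), hirota_const,
      hirota_mul hpow (hu n x hx), hirota_sub_cpow hij c hslit]
    simp only [Pi.mul_apply]
    field_simp
    ring
  have hToda := hirota_eq_of_contiguity (a := α i + n) (b := α j - n) hw
    (by simpa [hαsh, hij, hij.symm, sub_eq_add_neg] using hEPD n i j hij x hx)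
    (hH n x hx) (hB n x hx)
  have hprod : τ (n+1) x * τ (n-1) x = (B n * ((x i - x j) ^ c / (x i - x j))) ^ 2
      * ((α i + n) * (α j - n + 1) * u (n+1) x * u (n-1) x) := by
    have hexp : (x i - x j) ^ ((α i + ↑(n + 1)) * (α j - ↑(n + 1)))
        * (x i - x j) ^ ((α i + ↑(n - 1)) * (α j - ↑(n - 1)))
        = ((x i - x j) ^ c / (x i - x j)) ^ 2 := by
      push_cast
      convert cpow_mul_cpow_shift hw (α i + n) (α j - n) using 3 <;> ring
    simp only [hτ]
    linear_combination (u (n+1) x * u (n-1) x) * ((x i - x j) ^ c / (x i - x j)) ^ 2 * hBrec n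
      + B (n+1) * B (n-1) * u (n+1) x * u (n-1) x * hexp
  show hirota i j (τ n) x = _
  rw [hgauge, hprod, ← hToda]

/-- Theorem 4.10(1), the main theorem: given a family `u_n` of solutions of the
Euler–Poisson–Darboux systems at shifted parameters `α + n(e_i − e_j)` connected by the
contiguity relations `u_{n+1} = H_n u_n` and `L_{j,i}(α+n(e_i−e_j))u_n = p(n)·u_{n−1}`,
and `B` with `B(n+1)B(n−1) = p(n)B(n)²` where `p(n) = (α_i+n)(α_j−n+1) ≠ 0`, the family
`τ_n = B(n)·(x_i−x_j)^{(α_i+n)(α_j−n)}·u_n` solves the bilinear 2-dimensional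
Toda–Hirota equation `τ_n·∂_i∂_j τ_n − (∂_iτ_n)(∂_jτ_n) = τ_{n+1}τ_{n−1}`. -/
theorem stmt_18 {N : ℕ} (hN : 2 ≤ N) (α : Fin N → ℂ)
    (i j : Fin N) (hij : i ≠ j)
    (hp : ∀ n : ℤ, (α i + n) * (α j - n + 1) ≠ 0)
    (Ω : Set (Fin N → ℂ)) (hΩ : IsOpen Ω)
    (hΩsub : Ω ⊆ {x | (∀ a b : Fin N, a ≠ b → x a ≠ x b) ∧
      x i - x j ∈ Complex.slitPlane})
    (u : ℤ → (Fin N → ℂ) → ℂ)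
    (hu : ∀ n : ℤ, AnalyticOnNhd ℂ (u n) Ω)
    (αsh : ℤ → Fin N → ℂ)
    (hαsh : ∀ n : ℤ, αsh n
      = fun k => α k + (n : ℂ) *
          ((Pi.single i (1 : ℂ) : Fin N → ℂ) k - (Pi.single j (1 : ℂ) : Fin N → ℂ) k))
    (hEPD : ∀ n : ℤ, ∀ p q : Fin N, p ≠ q → ∀ x ∈ Ω,
      pder p (pder q (u n)) x + (αsh n q / (x p - x q)) * pder p (u n) x
        + (αsh n p / (x q - x p)) * pder q (u n) x = 0)
    (hH : ∀ n : ℤ, ∀ x ∈ Ω,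
      u (n+1) x = (x i - x j) * pder j (u n) x + (α j - n) * u n x)
    (hB : ∀ n : ℤ, ∀ x ∈ Ω,
      (x j - x i) * pder i (u n) x + (α i + n) * u n x
        = (α i + n) * (α j - n + 1) * u (n-1) x)
    (B : ℤ → ℂ)
    (hBrec : ∀ n : ℤ, B (n+1) * B (n-1) = (α i + n) * (α j - n + 1) * (B n)^2)
    (τ : ℤ → (Fin N → ℂ) → ℂ)
    (hτ : ∀ n : ℤ, τ n
      = fun x => B n * (x i - x j) ^ ((α i + n) * (α j - n)) * u n x) :
    ∀ n : ℤ, ∀ x ∈ Ω,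
      τ n x * pder i (pder j (τ n)) x - pder i (τ n) x * pder j (τ n) x
        = τ (n+1) x * τ (n-1) x :=
  stmt_18_general α i j hij Ω hΩsub u hu αsh hαsh hEPD hH hB B hBrec τ hτ
end
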